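/- Let n ≥ 2, let K ⊆ ℝⁿ be a convex body, and define f : ℝⁿ → ℝ by f(x) := infDist(x, ∂K), the (Euclidean) distance from x to the topological boundary of K. Then for Lebesgue-almost every x in the interior of K, f is differentiable at x and ‖fderiv ℝ f x‖ = 1. -/

import Mathlib

/-! The distance function to a set is 1-Lipschitz, so by Rademacher's theorem it is differentiable
almost everywhere, with derivative of norm at most 1. Where it is positive, it decreases at unit
rate along the segment towards a nearest point `p`, so the derivative evaluated at `p - x` has
absolute value `‖p - x‖`, which forces norm 1. Interior points of a compact body in `ℝⁿ` are at
positive distance from its (nonempty) boundary. -/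

open MeasureTheory Metric Set AffineMap

section InfDist

variable {E : Type*} [NormedAddCommGroup E] [NormedSpace ℝ E] {s : Set E} {x p : E}

theorem infDist_lineMap_of_infDist_eq_dist (hp : p ∈ closure s) (h : infDist x s = dist x p)
    {t : ℝ} (ht : t ∈ Icc (0 : ℝ) 1) :
    infDist (lineMap x p t) s = (1 - t) * infDist x s := by
  refine le_antisymm ?_ ?_
  · calc infDist (lineMap x p t) s = infDist (lineMap x p t) (closure s) := infDist_closure.symm
      _ ≤ dist (lineMap x p t) p := infDist_le_dist_of_mem hp
      _ = (1 - t) * infDist x s := by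
        rw [dist_lineMap_right, h, Real.norm_of_nonneg (sub_nonneg.2 ht.2)]
  · have := infDist_le_infDist_add_dist (x := x) (y := lineMap x p t) (s := s)
    rw [dist_comm, dist_lineMap_left, Real.norm_of_nonneg ht.1, ← h] at this
    linarith

theorem HasFDerivAt.infDist_apply_sub_eq {L : E →L[ℝ] ℝ}
    (hL : HasFDerivAt (infDist · s) L x) (hp : p ∈ closure s) (h : infDist x s = dist x p) :
    L (p - x) = -infDist x s := by
  have hg : HasDerivWithinAt (fun t : ℝ => infDist (lineMap x p t) s) (L (p - x)) (Icc 0 1) 0 :=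
    (hL.comp_hasDerivAt_of_eq 0 hasDerivAt_lineMap (lineMap_apply_zero x p).symm).hasDerivWithinAt
  have hline : HasDerivWithinAt (fun t : ℝ => infDist (lineMap x p t) s) (-infDist x s)
      (Icc 0 1) 0 := by
    refine HasDerivWithinAt.congr_of_mem ?_
      (fun t ht => infDist_lineMap_of_infDist_eq_dist hp h ht) (left_mem_Icc.2 zero_le_one)
    simpa using ((hasDerivAt_id (0 : ℝ)).const_sub 1).mul_const (infDist x s) |>.hasDerivWithinAt
  exact (uniqueDiffOn_Icc_zero_one 0 (left_mem_Icc.2 zero_le_one)).eq_deriv _ hg hline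

theorem norm_fderiv_infDist_eq_one [ProperSpace E] (hx : 0 < infDist x s)
    (hd : DifferentiableAt ℝ (infDist · s) x) : ‖fderiv ℝ (infDist · s) x‖ = 1 := by
  have hs : s.Nonempty := by
    rcases s.eq_empty_or_nonempty with rfl | hs
    · simp at hx
    · exact hs
  obtain ⟨p, hp, hxp⟩ := exists_mem_closure_infDist_eq_dist hs x
  set L := fderiv ℝ (infDist · s) x
  have hslope : L (p - x) = -infDist x s := hd.hasFDerivAt.infDist_apply_sub_eq hp hxp
  have hle : ‖L‖ ≤ 1 := by simpa using hd.hasFDerivAt.le_of_lipschitz (lipschitz_infDist_pt s)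
  have hge : infDist x s ≤ ‖L‖ * infDist x s :=
    calc infDist x s = ‖L (p - x)‖ := by rw [hslope, norm_neg, Real.norm_of_nonneg hx.le]
      _ ≤ ‖L‖ * ‖p - x‖ := L.le_opNorm _
      _ = ‖L‖ * infDist x s := by rw [← dist_eq_norm', hxp]
  nlinarith

theorem ae_differentiableAt_infDist_and_norm_fderiv_eq_one [FiniteDimensional ℝ E]
    [MeasurableSpace E] [BorelSpace E] (μ : Measure E) [μ.IsAddHaarMeasure] (s : Set E) :
    ∀ᵐ x ∂μ, 0 < infDist x s →
      DifferentiableAt ℝ (infDist · s) x ∧ ‖fderiv ℝ (infDist · s) x‖ = 1 := by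
  filter_upwards [(lipschitz_infDist_pt s).ae_differentiableAt (μ := μ)] with x hd hx
  exact ⟨hd, norm_fderiv_infDist_eq_one hx hd⟩

end InfDist

theorem infDist_frontier_pos_of_mem_interior {X : Type*} [MetricSpace X] [PreconnectedSpace X]
    {K : Set X} {x : X} (hK : K ≠ univ) (hx : x ∈ interior K) : 0 < infDist x (frontier K) :=
  (isClosed_frontier.notMem_iff_infDist_pos
    (nonempty_frontier_iff.2 ⟨⟨x, interior_subset hx⟩, hK⟩)).1 fun h => h.2 hx

theorem distance_to_boundary_ae_deriv_norm_one_general (n : ℕ) (hn : 2 ≤ n)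
    (K : Set (EuclideanSpace ℝ (Fin n)))
    (hKc : IsCompact K) :
    ∀ᵐ x ∂(volume.restrict (interior K)),
      DifferentiableAt ℝ (fun y : EuclideanSpace ℝ (Fin n) => infDist y (frontier K)) x ∧
      ‖fderiv ℝ (fun y : EuclideanSpace ℝ (Fin n) => infDist y (frontier K)) x‖ = 1 := by
  have : Nonempty (Fin n) := ⟨⟨0, by omega⟩⟩
  rw [ae_restrict_iff' isOpen_interior.measurableSet]
  filter_upwards [ae_differentiableAt_infDist_and_norm_fderiv_eq_one volume (frontier K)]
    with x hx hxK
  exact hx (infDist_frontier_pos_of_mem_interior hKc.ne_univ hxK)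

/-- For a convex body `K ⊆ ℝⁿ`, the distance function to the boundary
`f(x) = infDist(x, ∂K)` is, at Lebesgue-almost every point of the interior of `K`,
differentiable with derivative of norm one. -/
theorem distance_to_boundary_ae_deriv_norm_one (n : ℕ) (hn : 2 ≤ n)
    (K : Set (EuclideanSpace ℝ (Fin n)))
    (hKc : IsCompact K) (hKconv : Convex ℝ K) (hKint : (interior K).Nonempty) :
    ∀ᵐ x ∂(volume.restrict (interior K)),
      DifferentiableAt ℝ (fun y : EuclideanSpace ℝ (Fin n) => infDist y (frontier K)) x ∧
      ‖fderiv ℝ (fun y : EuclideanSpace ℝ (Fin n) => infDist y (frontier K)) x‖ = 1 :=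
  distance_to_boundary_ae_deriv_norm_one_general n hn K hKc
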